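/- Let N ≥ 1. The map D : ℝ^N → ℝ^N sending x to its unnormalized type-II DCT, (Dx)[k] = Σ_{n=0}^{N−1} x[n] cos(π(n+1/2)k/N), is a linear bijection. Consequently, for a, x ∈ ℝ^N, a vector y ∈ ℝ^N equals the symmetric convolution a *_s x if and only if (Dy)[k] = Â[k]·(Dx)[k] for all 0 ≤ k ≤ N−1, where Â[k] = a[0] + 2 Σ_{n=1}^{N−1} a[n] cos(πnk/N). (This one-to-one correspondence between space-domain kernels and their transform-domain representations is what allows convolution kernel weights to be learned directly in the transform domain.) -/

import Mathlib

open Finset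

/-- Unnormalized type-II DCT of `x ∈ ℝ^N`:
`(Dx)[k] = Σ_{n=0}^{N−1} x[n] cos(π(n+1/2)k/N)`. -/
noncomputable def dct (N : ℕ) (x : Fin N → ℝ) : Fin N → ℝ := fun k =>
  ∑ n : Fin N, x n * Real.cos (Real.pi * (((n : ℕ) : ℝ) + 1 / 2) * ((k : ℕ) : ℝ) / (N : ℝ))

/-- Half-sample symmetric extension of `x ∈ ℝ^N`: `x_e[n] = x[n]` for `0 ≤ n ≤ N−1`
and `x_e[n] = x[2N−1−n]` for `N ≤ n ≤ 2N−1`. -/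
def symmExt (N : ℕ) (x : Fin N → ℝ) (n : ℕ) : ℝ :=
  if h : n < N then x ⟨n, h⟩
  else if h₂ : 2 * N - 1 - n < N then x ⟨2 * N - 1 - n, h₂⟩ else 0

/-- Whole-sample symmetric extension of the kernel `a ∈ ℝ^N`: `a_e[0] = a[0]`,
`a_e[m] = a[m]` and `a_e[2N−m] = a[m]` for `1 ≤ m ≤ N−1`, and `a_e[N] = 0`. -/
def kernelExt (N : ℕ) (a : Fin N → ℝ) (m : ℕ) : ℝ :=
  if h : m < N then a ⟨m, h⟩
  else if h₂ : N < m ∧ 2 * N - m < N then a ⟨2 * N - m, h₂.2⟩ else 0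

/-- Symmetric convolution `a *_s x`: the `2N`-periodic circular convolution of the
whole-sample symmetric extension of `a` with the half-sample symmetric extension of
`x`, restricted to indices `0 ≤ n ≤ N−1`. -/
noncomputable def symmConv (N : ℕ) (a x : Fin N → ℝ) : Fin N → ℝ := fun n =>
  ∑ m ∈ range (2 * N), kernelExt N a m * symmExt N x (((n : ℕ) + 2 * N - m) % (2 * N))

/-! The rows of the DCT matrix are orthogonal, because the half-sample cosine sums
`∑ n < N, cos (π (n + 1/2) j / N)` vanish unless `2N ∣ j` (as in Chebyshev–Gauss quadrature);
hence the matrix is invertible.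

For the convolution theorem, everything is lifted to `ℤ/2N`. The DCT of `y` is half the cosine sum
of the half-sample extension of `y` over a full period, and the half-sample extension of `a *_s x`
is the circular convolution of the two extensions (both are symmetric, so the convolution is too).
A shift of summation index then leaves `∑ m, a_e[m] cos (π k (t + m) / N)`, which equals
`Â[k] cos (π k t / N)` because `a_e` is even. -/

open Real Function
open scoped Matrix

lemma sum_range_cos_half_sample_eq_zero {N : ℕ} {j : ℤ} (hj : ¬ (2 * N : ℤ) ∣ j) :
    ∑ n ∈ range N, cos (π * (n + 1 / 2) * j / N) = 0 := by
  rcases eq_or_ne N 0 with rfl | hN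
  · simp
  have h := Polynomial.Chebyshev.sumZeroes_T_of_not_dvd hj
  simp only [Polynomial.Chebyshev.sumZeroes, Polynomial.Chebyshev.T_real_cos,
    mul_eq_zero, div_eq_zero_iff, pi_ne_zero, Nat.cast_eq_zero, hN, or_false, false_or] at h
  rw [← h]
  refine sum_congr rfl fun n _ => congrArg cos ?_
  field_simp

noncomputable def dctMatrix (N : ℕ) : Matrix (Fin N) (Fin N) ℝ :=
  Matrix.of fun k n => cos (π * ((n : ℕ) + 1 / 2) * (k : ℕ) / N)

lemma dct_eq_mulVec (N : ℕ) : dct N = (dctMatrix N).mulVec := by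
  ext x k
  simp [dct, dctMatrix, Matrix.mulVec, dotProduct, mul_comm]

lemma dctMatrix_mul_transpose_apply_of_ne {N : ℕ} {k l : Fin N} (hkl : k ≠ l) :
    (dctMatrix N * (dctMatrix N)ᵀ) k l = 0 := by
  have hkl' : (k : ℤ) ≠ l := by exact_mod_cast Fin.val_ne_of_ne hkl
  have not_dvd : ∀ j : ℤ, j ≠ 0 → |j| < 2 * N → ¬ (2 * N : ℤ) ∣ j :=
    fun j hj hlt hd => hj (Int.eq_zero_of_abs_lt_dvd hd hlt)
  have hsum := sum_range_cos_half_sample_eq_zero (N := N) (j := k + l)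
    (not_dvd _ (by omega) (by rw [abs_lt]; omega))
  have hdiff := sum_range_cos_half_sample_eq_zero (N := N) (j := k - l)
    (not_dvd _ (by omega) (by rw [abs_lt]; omega))
  rw [← Fin.sum_univ_eq_sum_range] at hsum hdiff
  simp only [Matrix.mul_apply, dctMatrix, Matrix.transpose_apply, Matrix.of_apply]
  calc _ = (∑ n : Fin N, cos (π * ((n : ℕ) + 1 / 2) * ((k + l : ℤ) : ℝ) / N)
          + ∑ n : Fin N, cos (π * ((n : ℕ) + 1 / 2) * ((k - l : ℤ) : ℝ) / N)) / 2 := by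
        rw [← sum_add_distrib, sum_div]
        refine sum_congr rfl fun n _ => ?_
        rw [eq_div_iff two_ne_zero, mul_comm, ← mul_assoc, two_mul_cos_mul_cos, add_comm]
        push_cast
        congr 2 <;> ring
    _ = 0 := by rw [hsum, hdiff]; simp

lemma dctMatrix_mul_transpose_apply_self_pos {N : ℕ} (k : Fin N) :
    0 < (dctMatrix N * (dctMatrix N)ᵀ) k k := by
  have hN : (0 : ℝ) < N := by exact_mod_cast k.pos
  have hk : ((k : ℕ) : ℝ) < N := by exact_mod_cast k.isLt
  simp only [Matrix.mul_apply, dctMatrix, Matrix.transpose_apply, Matrix.of_apply, ← sq]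
  refine lt_of_lt_of_le ?_ (single_le_sum (fun n _ => sq_nonneg _) (mem_univ ⟨0, k.pos⟩))
  refine pow_pos (cos_pos_of_mem_Ioo ⟨?_, ?_⟩) 2
  · have : 0 ≤ π * ((0 : ℕ) + 1 / 2) * (k : ℕ) / N := by positivity
    linarith [pi_pos]
  · rw [div_lt_iff₀ hN]
    nlinarith [pi_pos]

lemma isUnit_dctMatrix (N : ℕ) : IsUnit (dctMatrix N) := by
  set C := dctMatrix N
  have hdiag : C * Cᵀ = Matrix.diagonal fun k => (C * Cᵀ) k k := by
    ext k l
    by_cases h : k = l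
    · subst h; simp
    · rw [Matrix.diagonal_apply_ne _ h, dctMatrix_mul_transpose_apply_of_ne h]
  have hdet : 0 < C.det * C.det := by
    rw [← congrArg (C.det * ·) (Matrix.det_transpose C), ← Matrix.det_mul, hdiag,
      Matrix.det_diagonal]
    exact prod_pos fun k _ => dctMatrix_mul_transpose_apply_self_pos k
  rw [Matrix.isUnit_iff_isUnit_det, isUnit_iff_ne_zero]
  exact fun h => by simp [h] at hdet

lemma dct_bijective (N : ℕ) : Bijective (dct N) := by
  rw [dct_eq_mulVec]
  exact ⟨Matrix.mulVec_injective_iff_isUnit.2 (isUnit_dctMatrix N),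
    Matrix.mulVec_surjective_iff_isUnit.2 (isUnit_dctMatrix N)⟩

section CircularConvolution

variable {G R : Type*} [AddCommGroup G] [Fintype G] [CommSemiring R]

def circConv (a x : G → R) (n : G) : R := ∑ m, a m * x (n - m)

lemma sum_circConv_mul (a x φ : G → R) :
    ∑ n, circConv a x n * φ n = ∑ m, a m * ∑ j, x j * φ (j + m) := by
  simp only [circConv, sum_mul, mul_sum]
  rw [sum_comm]
  refine sum_congr rfl fun m _ => Fintype.sum_equiv (Equiv.subRight m) _ _ fun n => ?_
  simp only [Equiv.subRight_apply, sub_add_cancel]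
  ring

lemma circConv_sub_of_even {a x : G → R} (ha : a.Even) {c : G} (hx : ∀ n, x (c - n) = x n)
    (n : G) : circConv a x (c - n) = circConv a x n :=
  Fintype.sum_equiv (Equiv.neg G) _ _ fun m => by
    rw [Equiv.neg_apply, ha, sub_neg_eq_add, sub_sub, hx]

end CircularConvolution

noncomputable def cosMode (N k : ℕ) (t : ℝ) : ℝ := cos (π * k * t / N)

section CosMode

variable {N : ℕ} (k : ℕ)

lemma cosMode_periodic : Periodic (cosMode N k) (2 * N) := by
  intro t
  rcases eq_or_ne N 0 with rfl | hN
  · simp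
  rw [cosMode, cosMode, show π * k * (t + 2 * N) / N = π * k * t / N + k * (2 * π) by
    field_simp]
  exact cos_add_nat_mul_two_pi _ _

lemma cosMode_neg (t : ℝ) : cosMode N k (-t) = cosMode N k t := by
  rw [cosMode, cosMode, mul_neg, neg_div, cos_neg]

lemma cosMode_two_mul_sub (t : ℝ) : cosMode N k (2 * N - t) = cosMode N k t := by
  rw [(cosMode_periodic k).sub_eq', cosMode_neg]

lemma cosMode_add_add_cosMode_sub (t s : ℝ) :
    cosMode N k (t + s) + cosMode N k (t - s) = 2 * cosMode N k t * cosMode N k s := by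
  rw [cosMode, cosMode, cosMode, cosMode, two_mul_cos_mul_cos, add_comm]
  congr 2 <;> ring

lemma cosMode_natCast_mod_add (r : ℕ) (s : ℝ) :
    cosMode N k ((r % (2 * N) : ℕ) + s) = cosMode N k (r + s) := by
  have h : Periodic (fun r : ℕ => cosMode N k (r + s)) (2 * N) := fun r => by
    simp only [Nat.cast_add, Nat.cast_mul, Nat.cast_ofNat, add_right_comm _ _ s]
    exact cosMode_periodic k _
  exact h.map_mod_nat r

lemma cosMode_val_add [NeZero N] (j m : Fin (2 * N)) (s : ℝ) :
    cosMode N k (((j + m : Fin (2 * N)) : ℕ) + s) = cosMode N k (j + s + m) := by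
  rw [Fin.val_add, cosMode_natCast_mod_add]
  push_cast
  ring_nf

lemma cosMode_sub_val_neg [NeZero N] (m : Fin (2 * N)) (t : ℝ) :
    cosMode N k (t - ((-m : Fin (2 * N)) : ℕ)) = cosMode N k (t + m) := by
  rw [Fin.val_neg]
  split_ifs with h
  · simp [h]
  · have h_sub : t - ((2 * N - m : ℕ) : ℝ) = t + m - 2 * N := by
      push_cast [Nat.cast_sub m.isLt.le]
      ring
    rw [h_sub, (cosMode_periodic k).sub_eq]

end CosMode

lemma sum_range_two_mul_of_reflect {M : Type*} [AddCommMonoid M] {N : ℕ} (g : ℕ → M)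
    (hg : ∀ n < N, g (2 * N - 1 - n) = g n) :
    ∑ n ∈ range (2 * N), g n = 2 • ∑ n ∈ range N, g n := by
  rw [two_mul, sum_range_add, two_nsmul, ← sum_range_reflect (fun i => g (N + i))]
  congr 1
  refine sum_congr rfl fun n hn => ?_
  have hn := mem_range.1 hn
  rw [show N + (N - 1 - n) = 2 * N - 1 - n by omega, hg n hn]

section Extensions

variable {N : ℕ}

lemma symmExt_of_lt (x : Fin N → ℝ) {n : ℕ} (hn : n < N) : symmExt N x n = x ⟨n, hn⟩ :=
  dif_pos hn

lemma symmExt_two_mul_sub_one_sub (x : Fin N → ℝ) {n : ℕ} (hn : n < 2 * N) :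
    symmExt N x (2 * N - 1 - n) = symmExt N x n := by
  unfold symmExt
  split_ifs <;> first | omega | (congr 2 <;> omega)

lemma kernelExt_self (a : Fin N → ℝ) : kernelExt N a N = 0 := by
  simp [kernelExt]

lemma kernelExt_two_mul_sub (a : Fin N → ℝ) {m : ℕ} (h0 : 0 < m) (hm : m < 2 * N) :
    kernelExt N a (2 * N - m) = kernelExt N a m := by
  unfold kernelExt
  split_ifs <;> first | omega | (congr 2 <;> omega)

lemma even_kernelExt [NeZero N] (a : Fin N → ℝ) :
    (fun m : Fin (2 * N) => kernelExt N a m).Even := fun m => by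
  show kernelExt N a ↑(-m) = kernelExt N a m
  rw [Fin.val_neg]
  split_ifs with h
  · simp [h]
  · exact kernelExt_two_mul_sub a (Nat.pos_of_ne_zero (Fin.val_ne_zero_iff.2 h)) m.isLt

end Extensions

section ConvolutionTheorem

variable {N : ℕ}

lemma dct_apply_eq_sum_range (x : Fin N → ℝ) (k : Fin N) :
    dct N x k = ∑ n ∈ range N, symmExt N x n * cosMode N k (n + 1 / 2) := by
  rw [dct, ← Fin.sum_univ_eq_sum_range]
  refine sum_congr rfl fun n _ => ?_
  rw [symmExt_of_lt x n.isLt, cosMode, mul_right_comm π]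

lemma sum_symmExt_mul_cosMode (x : Fin N → ℝ) (k : Fin N) :
    ∑ n : Fin (2 * N), symmExt N x n * cosMode N k (n + 1 / 2) = 2 * dct N x k := by
  rw [Fin.sum_univ_eq_sum_range (fun n => symmExt N x n * cosMode N k (n + 1 / 2)),
    sum_range_two_mul_of_reflect, dct_apply_eq_sum_range, two_nsmul, two_mul]
  intro n hn
  rw [symmExt_two_mul_sub_one_sub x (by omega), Nat.cast_sub (by omega), Nat.cast_sub (by omega),
    show ((2 * N : ℕ) : ℝ) - (1 : ℕ) - n + 1 / 2 = 2 * N - (n + 1 / 2) by push_cast; ring,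
    cosMode_two_mul_sub]

/-- The transform-domain kernel `Â`: the `2N`-point cosine transform of the whole-sample
extension of `a`. -/
noncomputable def kernelHat (N : ℕ) (a : Fin N → ℝ) (k : ℕ) : ℝ :=
  ∑ m : Fin (2 * N), kernelExt N a m * cosMode N k m

lemma sum_kernelExt_mul_cosMode_add [NeZero N] (a : Fin N → ℝ) (k : ℕ) (t : ℝ) :
    ∑ m : Fin (2 * N), kernelExt N a m * cosMode N k (t + m)
      = kernelHat N a k * cosMode N k t := by
  have hreflect : ∑ m : Fin (2 * N), kernelExt N a m * cosMode N k (t + m)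
      = ∑ m : Fin (2 * N), kernelExt N a m * cosMode N k (t - m) :=
    Fintype.sum_equiv (Equiv.neg _) _ _ fun m => by
      rw [Equiv.neg_apply, cosMode_sub_val_neg, show kernelExt N a ↑(-m) = kernelExt N a m from
        even_kernelExt a m]
  have htwice : 2 * ∑ m : Fin (2 * N), kernelExt N a m * cosMode N k (t + m)
      = 2 * (kernelHat N a k * cosMode N k t) := by
    rw [two_mul]
    nth_rw 2 [hreflect]
    rw [← sum_add_distrib, kernelHat, sum_mul, mul_sum]
    refine sum_congr rfl fun m _ => ?_
    rw [← mul_add, cosMode_add_add_cosMode_sub]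
    ring
  linarith

lemma kernelHat_eq (hN : 1 ≤ N) (a : Fin N → ℝ) (k : ℕ) :
    kernelHat N a k = a ⟨0, hN⟩ + 2 * ∑ n ∈ univ.filter (fun n : Fin N => 1 ≤ (n : ℕ)),
      a n * cos (π * (n : ℕ) * k / N) := by
  obtain ⟨M, rfl⟩ : ∃ M, N = M + 1 := ⟨N - 1, by omega⟩
  set h : ℕ → ℝ := fun m => kernelExt (M + 1) a m * cosMode (M + 1) k m with h_def
  have h_reflect (m : ℕ) (h0 : 0 < m) (hm : m < 2 * (M + 1)) : h (2 * (M + 1) - m) = h m := by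
    simp only [h_def]
    rw [kernelExt_two_mul_sub a h0 hm, Nat.cast_sub hm.le, Nat.cast_mul, Nat.cast_ofNat,
      cosMode_two_mul_sub]
  have h_lower : ∑ n ∈ univ.filter (fun n : Fin (M + 1) => 1 ≤ (n : ℕ)),
      a n * cos (π * (n : ℕ) * k / (M + 1 : ℕ)) = ∑ i ∈ range M, h (i + 1) := by
    rw [sum_filter, Fin.sum_univ_succ, if_neg (by simp), zero_add,
      ← Fin.sum_univ_eq_sum_range (fun i => h (i + 1))]
    refine sum_congr rfl fun i _ => ?_
    simp only [h_def, Fin.val_succ, le_add_iff_nonneg_left, zero_le, if_true]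
    rw [kernelExt, dif_pos (by omega), cosMode, mul_right_comm π]
    rfl
  have h_upper : ∑ i ∈ range (M + 1), h (M + 1 + i) = ∑ i ∈ range M, h (i + 1) := by
    have h_self : h (M + 1) = 0 := by simp only [h_def, kernelExt_self, zero_mul]
    rw [← sum_range_reflect, sum_range_succ, show M + 1 + (M + 1 - 1 - M) = M + 1 by omega,
      h_self, add_zero]
    refine sum_congr rfl fun i hi => ?_
    have hi := mem_range.1 hi
    rw [show M + 1 + (M + 1 - 1 - i) = 2 * (M + 1) - (i + 1) by omega,
      h_reflect _ i.succ_pos (by omega)]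
  rw [kernelHat, Fin.sum_univ_eq_sum_range h, two_mul, sum_range_add, sum_range_succ', h_upper,
    h_lower]
  simp [h_def, kernelExt, cosMode]
  ring

lemma symmConv_eq_circConv [NeZero N] (a x : Fin N → ℝ) (n : Fin N) :
    symmConv N a x n = circConv (fun m : Fin (2 * N) => kernelExt N a m)
      (fun j : Fin (2 * N) => symmExt N x j) (Fin.castLE (by omega) n) := by
  rw [symmConv, circConv, ← Fin.sum_univ_eq_sum_range
    (fun m => kernelExt N a m * symmExt N x ((n + 2 * N - m) % (2 * N)))]
  refine sum_congr rfl fun m _ => ?_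
  rw [Fin.val_sub, Fin.val_castLE, show (n : ℕ) + 2 * N - m = 2 * N - m + n by omega]

lemma symmExt_symmConv [NeZero N] (a x : Fin N → ℝ) (n : Fin (2 * N)) :
    symmExt N (symmConv N a x) n = circConv (fun m : Fin (2 * N) => kernelExt N a m)
      (fun j : Fin (2 * N) => symmExt N x j) n := by
  have h_lower (j : Fin (2 * N)) (hj : (j : ℕ) < N) :
      symmExt N (symmConv N a x) j = circConv (fun m : Fin (2 * N) => kernelExt N a m)
        (fun j : Fin (2 * N) => symmExt N x j) j := by
    rw [symmExt_of_lt _ hj, symmConv_eq_circConv]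
    rfl
  have h_rev (j : Fin (2 * N)) : Fin.rev j = Fin.rev 0 - j := by rw [← Fin.rev_add, zero_add]
  have h_val_rev (j : Fin (2 * N)) : ((Fin.rev j : Fin (2 * N)) : ℕ) = 2 * N - 1 - j := by
    rw [Fin.val_rev]
    omega
  by_cases hn : (n : ℕ) < N
  · exact h_lower n hn
  -- the half-sample symmetry of both extensions reflects the convolution about `2N - 1`
  rw [← symmExt_two_mul_sub_one_sub _ n.isLt, ← h_val_rev, h_lower _ (by rw [h_val_rev]; omega),
    h_rev, circConv_sub_of_even (even_kernelExt a)]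
  intro j
  simp only [← h_rev, h_val_rev, symmExt_two_mul_sub_one_sub x j.isLt]

lemma dct_symmConv [NeZero N] (a x : Fin N → ℝ) (k : Fin N) :
    dct N (symmConv N a x) k = kernelHat N a k * dct N x k := by
  have h : 2 * dct N (symmConv N a x) k = kernelHat N a k * (2 * dct N x k) := calc
    2 * dct N (symmConv N a x) k
        = ∑ n : Fin (2 * N), circConv (fun m : Fin (2 * N) => kernelExt N a m)
            (fun j : Fin (2 * N) => symmExt N x j) n * cosMode N k (n + 1 / 2) := by
          simp only [← sum_symmExt_mul_cosMode, symmExt_symmConv]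
    _ = ∑ m : Fin (2 * N), kernelExt N a m
          * ∑ j : Fin (2 * N), symmExt N x j * cosMode N k (j + 1 / 2 + m) := by
          simp only [sum_circConv_mul, cosMode_val_add]
    _ = ∑ j : Fin (2 * N), symmExt N x j
          * ∑ m : Fin (2 * N), kernelExt N a m * cosMode N k (j + 1 / 2 + m) := by
          simp only [mul_sum]
          rw [sum_comm]
          exact sum_congr rfl fun _ _ => sum_congr rfl fun _ _ => by ring
    _ = kernelHat N a k * (2 * dct N x k) := by
          simp only [sum_kernelExt_mul_cosMode_add, ← sum_symmExt_mul_cosMode, mul_sum]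
          exact sum_congr rfl fun _ _ => by ring
  linarith

end ConvolutionTheorem

/-- The type-II DCT is a linear bijection; consequently `y = a *_s x` if and only if
`(Dy)[k] = Â[k]·(Dx)[k]` for all `k`, where `Â[k] = a[0] + 2Σ_{n=1}^{N−1} a[n]cos(πnk/N)`.
This one-to-one correspondence between space-domain kernels and their transform-domain
representations allows convolution kernel weights to be learned in the transform domain. -/
theorem dct_bijective_and_convolution_characterization (N : ℕ) (hN : 1 ≤ N) :
    (∀ (c : ℝ) (x y : Fin N → ℝ), dct N (c • x + y) = c • dct N x + dct N y) ∧
    Function.Bijective (dct N) ∧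
    (∀ a x y : Fin N → ℝ,
      y = symmConv N a x ↔
        ∀ k : Fin N,
          dct N y k =
            (a ⟨0, hN⟩ +
                2 * ∑ n ∈ Finset.univ.filter (fun n : Fin N => 1 ≤ (n : ℕ)),
                  a n * Real.cos (Real.pi * ((n : ℕ) : ℝ) * ((k : ℕ) : ℝ) / (N : ℝ))) *
              dct N x k) := by
  have : NeZero N := ⟨by omega⟩
  refine ⟨fun c x y => by rw [dct_eq_mulVec, Matrix.mulVec_add, Matrix.mulVec_smul],
    dct_bijective N, fun a x y => ?_⟩
  simp only [← kernelHat_eq hN, ← dct_symmConv]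
  constructor
  · rintro rfl k
    rfl
  · intro h
    exact (dct_bijective N).injective (funext h)
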